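/- For every real α with 1 < α < 2, the sequence of fractional centred difference coefficients is strictly increasing along positive indices beyond the first: for every integer k ≥ 2 one has g_{k−1}^{(α)} < g_k^{(α)} < 0; equivalently, the absolute values |g_k^{(α)}| are strictly decreasing in k for k ≥ 1. By the symmetry g_{−k}^{(α)} = g_k^{(α)}, the coefficients are correspondingly strictly decreasing along negative indices k ≤ −2 as k decreases. -/

import Mathlib

open Real

/-!
The functional equation `Γ(s + 1) = s Γ(s)` gives the ratio
`g_{k+1} / g_k = (k - α/2) / (k + 1 + α/2)`, which lies in `(0, 1)` for `k ≥ 1` and `0 < α < 2`.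
Since `g_1 = -Γ(α+1) / (Γ(α/2) Γ(α/2 + 2)) < 0`, all `g_k` with `k ≥ 1` are negative and
multiplying by the ratio moves them strictly towards `0`.
-/

/-- The fractional centred difference coefficients
`g_k^{(α)} = ((−1)^k Γ(α+1)) / (Γ(α/2 − k + 1) Γ(α/2 + k + 1))`. -/
noncomputable def fracCoeff (α : ℝ) (k : ℤ) : ℝ :=
  ((-1 : ℝ) ^ k * Real.Gamma (α + 1)) /
    (Real.Gamma (α / 2 - (k : ℝ) + 1) * Real.Gamma (α / 2 + (k : ℝ) + 1))

lemma fracCoeff_neg (α : ℝ) (k : ℤ) : fracCoeff α (-k) = fracCoeff α k := by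
  have hsign : (-1 : ℝ) ^ (-k) = (-1) ^ k := by
    rw [zpow_neg, ← inv_zpow, inv_neg, inv_one]
  unfold fracCoeff
  rw [hsign]
  push_cast
  ring_nf

lemma fracCoeff_add_one (α : ℝ) (k : ℤ) (hl : α / 2 - k ≠ 0) (hr : α / 2 + k + 1 ≠ 0) :
    fracCoeff α (k + 1) = fracCoeff α k * ((k - α / 2) / (k + 1 + α / 2)) := by
  have hΓl : Gamma (α / 2 - k + 1) = (α / 2 - k) * Gamma (α / 2 - k) := Gamma_add_one hl
  have hΓr : Gamma (α / 2 + k + 1 + 1) = (α / 2 + k + 1) * Gamma (α / 2 + k + 1) :=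
    Gamma_add_one hr
  unfold fracCoeff
  push_cast
  rw [zpow_add_one₀ (by norm_num), show α / 2 - (k + 1) + 1 = α / 2 - k by ring,
    show α / 2 + (k + 1) + 1 = α / 2 + k + 1 + 1 by ring, hΓl, hΓr,
    show (k : ℝ) - α / 2 = -(α / 2 - k) by ring, show (k : ℝ) + 1 + α / 2 = α / 2 + k + 1 by ring]
  generalize α / 2 - k = a at *
  generalize α / 2 + k + 1 = b at *
  field_simp

lemma fracCoeff_one_neg (α : ℝ) (hα : 0 < α) : fracCoeff α 1 < 0 := by
  have hΓ₀ : 0 < Gamma (α + 1) := Gamma_pos_of_pos (by linarith)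
  have hΓ₁ : 0 < Gamma (α / 2 - 1 + 1) := Gamma_pos_of_pos (by linarith)
  have hΓ₂ : 0 < Gamma (α / 2 + 1 + 1) := Gamma_pos_of_pos (by linarith)
  unfold fracCoeff
  rw [zpow_one, Int.cast_one, neg_one_mul]
  exact div_neg_of_neg_of_pos (neg_neg_of_pos hΓ₀) (mul_pos hΓ₁ hΓ₂)

lemma fracCoeff_ratio_mem_Ioo {α : ℝ} (hα₀ : 0 < α) (hα₂ : α < 2) {k : ℤ} (hk : 1 ≤ k) :
    ((k - α / 2) / (k + 1 + α / 2) : ℝ) ∈ Set.Ioo 0 1 := by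
  have hk' : (1 : ℝ) ≤ k := by exact_mod_cast hk
  have hden : (0 : ℝ) < k + 1 + α / 2 := by linarith
  exact ⟨div_pos (by linarith) hden, (div_lt_one hden).2 (by linarith)⟩

lemma fracCoeff_add_one_of_one_le {α : ℝ} (hα₀ : 0 < α) (hα₂ : α < 2) {k : ℤ} (hk : 1 ≤ k) :
    fracCoeff α (k + 1) = fracCoeff α k * ((k - α / 2) / (k + 1 + α / 2)) := by
  have hk' : (1 : ℝ) ≤ k := by exact_mod_cast hk
  exact fracCoeff_add_one α k (by linarith) (by linarith)

lemma fracCoeff_neg_of_one_le {α : ℝ} (hα₀ : 0 < α) (hα₂ : α < 2) {k : ℤ} (hk : 1 ≤ k) :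
    fracCoeff α k < 0 := by
  induction k, hk using Int.leInduction with
  | base => exact fracCoeff_one_neg α hα₀
  | succ n hn ih =>
    rw [fracCoeff_add_one_of_one_le hα₀ hα₂ hn]
    exact mul_neg_of_neg_of_pos ih (fracCoeff_ratio_mem_Ioo hα₀ hα₂ hn).1

lemma fracCoeff_lt_fracCoeff_add_one {α : ℝ} (hα₀ : 0 < α) (hα₂ : α < 2) {k : ℤ} (hk : 1 ≤ k) :
    fracCoeff α k < fracCoeff α (k + 1) := by
  rw [fracCoeff_add_one_of_one_le hα₀ hα₂ hk]
  exact lt_mul_of_lt_one_right (fracCoeff_neg_of_one_le hα₀ hα₂ hk)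
    (fracCoeff_ratio_mem_Ioo hα₀ hα₂ hk).2

theorem fracCoeff_strict_mono_in_index (α : ℝ) (hα1 : 1 < α) (hα2 : α < 2) :
    (∀ k : ℤ, 2 ≤ k → fracCoeff α (k - 1) < fracCoeff α k ∧ fracCoeff α k < 0) ∧
    (∀ k : ℤ, 1 ≤ k → |fracCoeff α (k + 1)| < |fracCoeff α k|) ∧
    (∀ k : ℤ, fracCoeff α (-k) = fracCoeff α k) ∧
    (∀ k : ℤ, k ≤ -2 → fracCoeff α (k + 1) < fracCoeff α k) := by
  have hα0 : 0 < α := by linarith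
  refine ⟨fun k hk => ⟨?_, fracCoeff_neg_of_one_le hα0 hα2 (by omega)⟩, fun k hk => ?_,
    fracCoeff_neg α, fun k hk => ?_⟩
  · simpa using fracCoeff_lt_fracCoeff_add_one hα0 hα2 (k := k - 1) (by omega)
  · rw [abs_of_neg (fracCoeff_neg_of_one_le hα0 hα2 (by omega)),
      abs_of_neg (fracCoeff_neg_of_one_le hα0 hα2 hk), neg_lt_neg_iff]
    exact fracCoeff_lt_fracCoeff_add_one hα0 hα2 hk
  · rw [← fracCoeff_neg α k, ← fracCoeff_neg α (k + 1)]
    simpa [sub_eq_add_neg, add_comm] using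
      fracCoeff_lt_fracCoeff_add_one hα0 hα2 (k := -k - 1) (by omega)
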